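/- Let F be a field, β ∈ F, and let y₁, y₂ be nonzero elements of F. Define the deformed B₃ map φ̂₂(y₁,y₂) = (((y₁+β)²y₂ + β²)/y₁, (1 + β²(y₁+1)/(y₂(y₁+β)²))/y₁), and assume y₁+β ≠ 0 and that both image coordinates are nonzero. Then the rational function K̃₂(y₁,y₂) = y₁y₂ + y₁ + (2β+1)y₂ + β(β+2)·y₂/y₁ + β²·y₂/y₁² + (2β²+2β+1)/y₁ + 1/y₂ + 2β²/y₁² + (β²+1)/(y₁y₂) + β²/(y₁²y₂) satisfies K̃₂(φ̂₂(y₁,y₂)) = K̃₂(y₁,y₂); hence φ̂₂ is a Liouville integrable map of the plane. -/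

import Mathlib

/-- The first integral `K̃₂` of the deformed B₃ map `φ̂₂` (case `b₁ = β`,
`b₂ = b₃ = β²`). -/
noncomputable def KtilB3₂ {F : Type*} [Field F] (β y₁ y₂ : F) : F :=
  y₁ * y₂ + y₁ + (2 * β + 1) * y₂ + β * (β + 2) * y₂ / y₁ + β ^ 2 * y₂ / y₁ ^ 2 +
    (2 * β ^ 2 + 2 * β + 1) / y₁ + 1 / y₂ + 2 * β ^ 2 / y₁ ^ 2 +
    (β ^ 2 + 1) / (y₁ * y₂) + β ^ 2 / (y₁ ^ 2 * y₂)

lemma deformed_B3_map2_snd_eq_div {F : Type*} [Field F] (β y₁ y₂ : F)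
    (h₁ : y₁ ≠ 0) (h₂ : y₂ ≠ 0) (hβ : y₁ + β ≠ 0) :
    (1 + β ^ 2 * (y₁ + 1) / (y₂ * (y₁ + β) ^ 2)) / y₁ =
      (y₂ * (y₁ + β) ^ 2 + β ^ 2 * (y₁ + 1)) / (y₁ * y₂ * (y₁ + β) ^ 2) := by
  field_simp

theorem deformed_B3_map2_first_integral {F : Type*} [Field F] (β y₁ y₂ : F)
    (h₁ : y₁ ≠ 0) (h₂ : y₂ ≠ 0) (hβ : y₁ + β ≠ 0)
    (him₁ : ((y₁ + β) ^ 2 * y₂ + β ^ 2) / y₁ ≠ 0)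
    (him₂ : (1 + β ^ 2 * (y₁ + 1) / (y₂ * (y₁ + β) ^ 2)) / y₁ ≠ 0) :
    KtilB3₂ β (((y₁ + β) ^ 2 * y₂ + β ^ 2) / y₁)
        ((1 + β ^ 2 * (y₁ + 1) / (y₂ * (y₁ + β) ^ 2)) / y₁) =
      KtilB3₂ β y₁ y₂ := by
  rw [deformed_B3_map2_snd_eq_div β y₁ y₂ h₁ h₂ hβ] at him₂ ⊢
  have hA := (div_ne_zero_iff.mp him₁).1
  have hB := (div_ne_zero_iff.mp him₂).1
  -- Keep the numerators of the image atomic: `field_simp` would expand them and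
  -- then no longer recognise them as the nonzero `hA`, `hB`.
  generalize ha : (y₁ + β) ^ 2 * y₂ + β ^ 2 = a at hA ⊢
  generalize hb : y₂ * (y₁ + β) ^ 2 + β ^ 2 * (y₁ + 1) = b at hB ⊢
  unfold KtilB3₂
  field_simp
  subst ha hb
  ring
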